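/- arXiv:2107.01157 — 2 statements merged into one kernel-verified Lean document; each statement's English description precedes it below -/
import Mathlib

section
/- Let G be a finite group of even order, T the set consisting of the identity and the involutions of G. Then the matching number of the power graph of G is at least 1 + (|G| - |T|)/2. -/
open SimpleGraph

def powerGraph (G : Type*) [Group G] : SimpleGraph G where
  Adj x y := x ≠ y ∧ ((∃ n : ℕ, y ^ n = x) ∨ (∃ n : ℕ, x ^ n = y))
  symm := ⟨fun x y ⟨h, hp⟩ => ⟨h.symm, hp.symm⟩⟩
  loopless := ⟨fun x ⟨h, _⟩ => h rfl⟩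

noncomputable def matchingNumber {V : Type*} (Γ : SimpleGraph V) : ℕ :=
  sSup {n | ∃ M : Γ.Subgraph, M.IsMatching ∧ M.edgeSet.ncard = n}

def hasPerfectMatching {V : Type*} (Γ : SimpleGraph V) : Prop :=
  ∃ M : Γ.Subgraph, M.IsPerfectMatching

/-!
Pick an involution `t` (it exists since `|G|` is even). The map `x ↦ x⁻¹` pairs every element
outside `T` with a distinct power-graph neighbour, and `1` is adjacent to `t` because
`t ^ 0 = 1`. Swapping `1` and `t` after inverting gives an involution of `G` whose nontrivial
orbits on `{1, t} ∪ (G \ T)` are edges of the power graph, i.e. a matching covering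
`2 + (|G| - |T|)` vertices.
-/

namespace SimpleGraph.Subgraph

variable {V : Type*} {Γ : SimpleGraph V} {M : Γ.Subgraph}

theorem IsMatching.ncard_verts [Finite V] (hM : M.IsMatching) :
    M.verts.ncard = 2 * M.edgeSet.ncard := by
  classical
  have := Fintype.ofFinite V
  have hdeg (v : M.verts) : M.coe.degree v = 1 := by
    rw [SimpleGraph.degree_eq_one_iff_existsUnique_adj]
    obtain ⟨w, hvw, hunique⟩ := hM v.2
    exact ⟨⟨w, hvw.snd_mem⟩, hvw, fun w' hvw' => Subtype.ext (hunique _ hvw')⟩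
  calc M.verts.ncard = ∑ v : M.verts, M.coe.degree v := by
        simp [hdeg, Set.ncard_eq_toFinset_card']
    _ = 2 * M.coe.edgeFinset.card := by convert M.coe.sum_degrees_eq_twice_card_edges
    _ = 2 * M.coe.edgeSet.ncard := by
        rw [Set.ncard_eq_toFinset_card', Set.toFinset_card, edgeFinset_card]
    _ = 2 * M.edgeSet.ncard := by
        rw [← image_coe_edgeSet_coe,
          Set.ncard_image_of_injective _ (Sym2.map.injective Subtype.val_injective)]

end SimpleGraph.Subgraph

namespace SimpleGraph

variable {V : Type*} {Γ : SimpleGraph V}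

theorem exists_isMatching_verts_eq_of_involutive {σ : V → V} (hσ : Function.Involutive σ)
    {s : Set V} (hs : ∀ v ∈ s, σ v ∈ s) (hadj : ∀ v ∈ s, Γ.Adj v (σ v)) :
    ∃ M : Γ.Subgraph, M.IsMatching ∧ M.verts = s := by
  let M : Γ.Subgraph :=
    { verts := s
      Adj v w := v ∈ s ∧ w = σ v
      adj_sub := by rintro v _ ⟨hv, rfl⟩; exact hadj v hv
      edge_vert := And.left
      symm := ⟨by rintro v _ ⟨hv, rfl⟩; exact ⟨hs v hv, (hσ v).symm⟩⟩ }
  exact ⟨M, fun v hv => ⟨σ v, ⟨hv, rfl⟩, fun _ h => h.2⟩, rfl⟩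

theorem Subgraph.IsMatching.ncard_edgeSet_le_matchingNumber [Finite V] {M : Γ.Subgraph}
    (hM : M.IsMatching) : M.edgeSet.ncard ≤ matchingNumber Γ := by
  refine le_csSup ⟨Nat.card (Sym2 V), ?_⟩ ⟨M, hM, rfl⟩
  rintro _ ⟨N, -, rfl⟩
  exact Set.ncard_le_card _

end SimpleGraph

section PowerGraph

variable {G : Type*} [Group G]

theorem powerGraph_adj_one {x : G} (hx : x ≠ 1) : (powerGraph G).Adj x 1 :=
  ⟨hx, Or.inr ⟨0, pow_zero x⟩⟩

theorem powerGraph_adj_inv [Finite G] {x : G} (hx : x ^ 2 ≠ 1) : (powerGraph G).Adj x x⁻¹ := by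
  refine ⟨fun h => hx ?_, Or.inr (Submonoid.mem_powers_iff _ _ |>.mp ?_)⟩
  · rw [sq]; nth_rw 2 [h]; exact mul_inv_cancel x
  · exact mem_powers_iff_mem_zpowers.mpr (Subgroup.inv_mem _ (Subgroup.mem_zpowers x))

theorem exists_isMatching_powerGraph_verts_eq [Finite G] {t : G}
    (ht : t ^ 2 = 1) (ht₁ : t ≠ 1) :
    ∃ M : (powerGraph G).Subgraph, M.IsMatching ∧ M.verts = {1, t} ∪ {x | x ^ 2 ≠ 1} := by
  classical
  have ht_inv : t⁻¹ = t := inv_eq_of_mul_eq_one_left (by rwa [← sq])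
  have hswap_inv (y : G) : (Equiv.swap 1 t y)⁻¹ = Equiv.swap 1 t y⁻¹ := by
    rw [inv_injective.map_swap, inv_one, ht_inv]
  have hswap_of_sq_ne_one {x : G} (hx : x ^ 2 ≠ 1) : Equiv.swap 1 t x⁻¹ = x⁻¹ := by
    refine Equiv.swap_apply_of_ne_of_ne (fun h => hx ?_) (fun h => hx ?_)
    · rw [inv_eq_one.mp h, one_pow]
    · rwa [← inv_inv x, h, ht_inv]
  have hswap_mem_adj : ∀ x ∈ ({1, t} ∪ {x | x ^ 2 ≠ 1} : Set G),
      Equiv.swap 1 t x⁻¹ ∈ ({1, t} ∪ {x | x ^ 2 ≠ 1} : Set G) ∧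
        (powerGraph G).Adj x (Equiv.swap 1 t x⁻¹) := by
    rintro x ((rfl | rfl) | hx)
    · simpa using (powerGraph_adj_one ht₁).symm
    · simpa [ht_inv] using powerGraph_adj_one ht₁
    · rw [hswap_of_sq_ne_one hx]
      exact ⟨Or.inr (by simpa [inv_pow] using hx), powerGraph_adj_inv hx⟩
  exact exists_isMatching_verts_eq_of_involutive
    (fun x => by simp only [hswap_inv, inv_inv, Equiv.swap_apply_self])
    (fun x hx => (hswap_mem_adj x hx).1) (fun x hx => (hswap_mem_adj x hx).2)

theorem ncard_pair_union_sq_ne_one [Finite G] {t : G} (ht : t ^ 2 = 1) (ht₁ : t ≠ 1) :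
    ({1, t} ∪ {x : G | x ^ 2 ≠ 1}).ncard = 2 + (Nat.card G - {x : G | x ^ 2 = 1}.ncard) := by
  have hdisj : Disjoint ({1, t} : Set G) {x | x ^ 2 ≠ 1} := by
    rw [Set.disjoint_left]
    rintro x (rfl | rfl) hx
    exacts [hx (one_pow 2), hx ht]
  rw [Set.ncard_union_eq hdisj, Set.ncard_pair ht₁.symm, ← Set.ncard_compl]
  rfl

end PowerGraph

theorem stmt2 (G : Type*) [Group G] [Fintype G] (h : Even (Fintype.card G)) :
    1 + (Fintype.card G - {g : G | g ^ 2 = 1}.ncard) / 2 ≤ matchingNumber (powerGraph G) := by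
  obtain ⟨t, ht⟩ := exists_prime_orderOf_dvd_card 2 h.two_dvd
  have ht_sq : t ^ 2 = 1 := ht ▸ pow_orderOf_eq_one t
  have ht₁ : t ≠ 1 := by rintro rfl; simp at ht
  obtain ⟨M, hM, hverts⟩ := exists_isMatching_powerGraph_verts_eq ht_sq ht₁
  have hcard := hM.ncard_verts
  rw [hverts, ncard_pair_union_sq_ne_one ht_sq ht₁, Nat.card_eq_fintype_card] at hcard
  calc 1 + (Fintype.card G - {g : G | g ^ 2 = 1}.ncard) / 2 ≤ M.edgeSet.ncard := by omega
    _ ≤ matchingNumber (powerGraph G) := hM.ncard_edgeSet_le_matchingNumber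
end

section
/- Let G be a finite group that is not an elementary abelian 2-group, and suppose the matching number of its power graph equals m. Then |G| < 8m + 4. -/
/-!
If more than three quarters of the elements of a finite group square to `1`, then for any such
`a` more than half of the group lies in `S ∩ aS` (with `S` the set of square roots of `1`), and
all of it commutes with `a`; so every square root of `1` is central. Every `g` is then a product
`(g z) z` of two commuting square roots of `1`, hence `g ^ 2 = 1`.

So outside elementary abelian `2`-groups at least a quarter of the elements satisfy `x ^ 2 ≠ 1`,
and pairing each of them with its inverse (a power of it) is a matching of the power graph with
at least `|G| / 8` edges.
-/

open SimpleGraph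

open Finset Pointwise

theorem commute_of_sq_eq_one {M : Type*} [Monoid M] {a b : M} (ha : a ^ 2 = 1) (hb : b ^ 2 = 1)
    (hab : (a * b) ^ 2 = 1) : Commute a b := by
  rw [sq] at ha hb hab
  symm
  calc b * a = a * a * (b * a) * (b * b) := by rw [ha, hb, one_mul, mul_one]
    _ = a * (a * b * (a * b)) * b := by simp only [mul_assoc]
    _ = a * b := by rw [hab, mul_one]

theorem Subgroup.eq_top_of_card_lt_two_mul {G : Type*} [Group G] [Finite G] (H : Subgroup G)
    (h : Nat.card G < 2 * Nat.card H) : H = ⊤ := by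
  by_contra hne
  have hindex : 2 ≤ H.index := by
    have := H.index_ne_zero_of_finite
    have := mt Subgroup.index_eq_one.mp hne
    omega
  have := H.index_mul_card
  nlinarith

theorem Finset.two_mul_card_le_card_add_card_inter_smul {G : Type*} [Group G] [Fintype G]
    [DecidableEq G] (s : Finset G) (a : G) : 2 * #s ≤ Fintype.card G + #(s ∩ a • s) := by
  have hunion := card_union_add_card_inter s (a • s)
  have huniv := card_le_univ (s ∪ a • s)
  rw [card_smul_finset] at hunion
  omega

theorem SimpleGraph.Subgraph.IsMatching.ncard_verts_le_two_mul {V : Type*} [Finite V]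
    {Γ : SimpleGraph V} {M : Γ.Subgraph} (hM : M.IsMatching) :
    M.verts.ncard ≤ 2 * M.edgeSet.ncard := by
  classical
  have := Fintype.ofFinite V
  have hsub : M.verts.toFinset ⊆ M.edgeSet.toFinset.biUnion Sym2.toFinset := by
    intro v hv
    have := hM.verts_eq_biUnion_edgeSet ▸ Set.mem_toFinset.mp hv
    simpa using this
  rw [Set.ncard_eq_toFinset_card', Set.ncard_eq_toFinset_card', mul_comm]
  refine (card_le_card hsub).trans (card_biUnion_le_card_mul _ _ 2 fun e _ => ?_)
  rw [Sym2.card_toFinset]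
  split_ifs <;> omega

theorem ncard_edgeSet_le_matchingNumber {V : Type*} [Finite V] {Γ : SimpleGraph V}
    {M : Γ.Subgraph} (hM : M.IsMatching) : M.edgeSet.ncard ≤ matchingNumber Γ := by
  refine le_csSup ⟨Nat.card (Sym2 V), ?_⟩ ⟨M, hM, rfl⟩
  rintro _ ⟨N, -, rfl⟩
  exact Set.ncard_le_card _

section

variable {G : Type*} [Group G] [Fintype G] [DecidableEq G]

theorem commute_of_sq_eq_one_of_three_mul_card_lt
    (hS : 3 * Fintype.card G < 4 * #{x : G | x ^ 2 = 1}) {a : G} (ha : a ^ 2 = 1) (b : G) :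
    Commute a b := by
  set S : Finset G := {x | x ^ 2 = 1}
  have hsub : ((S ∩ a • S : Finset G) : Set G) ⊆ Subgroup.centralizer {a} := by
    intro y hy
    obtain ⟨hy, hyaS⟩ := mem_inter.mp (mem_coe.mp hy)
    obtain ⟨z, hz, rfl⟩ := mem_smul_finset.mp hyaS
    have haz : a * (a • z) = z := by rw [smul_eq_mul, ← mul_assoc, ← sq, ha, one_mul]
    simp only [S, mem_filter, mem_univ, true_and] at hy hz
    exact Subgroup.mem_centralizer_singleton_iff.mpr
      (commute_of_sq_eq_one ha hy (by rwa [haz])).symm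
  have hcard : Fintype.card G < 2 * Nat.card (Subgroup.centralizer {a}) := by
    have hinter := two_mul_card_le_card_add_card_inter_smul S a
    have hle : #(S ∩ a • S) ≤ Nat.card (Subgroup.centralizer {a}) := by
      rw [← SetLike.coe_sort_coe, Nat.card_coe_set_eq, ← Set.ncard_coe_finset]
      exact Set.ncard_le_ncard hsub
    omega
  have hb := (Subgroup.centralizer {a}).eq_top_of_card_lt_two_mul
    (by rwa [Nat.card_eq_fintype_card]) ▸ Subgroup.mem_top b
  exact (Subgroup.mem_centralizer_singleton_iff.mp hb).symm

theorem sq_eq_one_of_three_mul_card_lt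
    (hS : 3 * Fintype.card G < 4 * #{x : G | x ^ 2 = 1}) (g : G) : g ^ 2 = 1 := by
  set S : Finset G := {x | x ^ 2 = 1}
  obtain ⟨y, hy⟩ : (S ∩ g • S).Nonempty := by
    have hinter := two_mul_card_le_card_add_card_inter_smul S g
    rw [← card_pos]
    omega
  obtain ⟨hy, hygS⟩ := mem_inter.mp hy
  obtain ⟨z, hz, rfl⟩ := mem_smul_finset.mp hygS
  simp only [S, mem_filter, mem_univ, true_and, smul_eq_mul] at hy hz
  have hg : g = g * z * z := by rw [mul_assoc, ← sq, hz, mul_one]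
  rw [hg, (commute_of_sq_eq_one_of_three_mul_card_lt hS hy z).mul_pow, hy, hz, one_mul]

end

def inverseMatching (G : Type*) [Group G] [Finite G] : (powerGraph G).Subgraph where
  verts := {x | x ^ 2 ≠ 1}
  Adj x y := x ≠ y ∧ x * y = 1
  adj_sub := by
    rintro x y ⟨hne, hxy⟩
    refine ⟨hne, Or.inr ?_⟩
    rw [← Submonoid.mem_powers_iff, eq_inv_of_mul_eq_one_right hxy, mem_powers_iff_mem_zpowers]
    exact inv_mem (Subgroup.mem_zpowers x)
  edge_vert := by
    rintro x y ⟨hne, hxy⟩ hx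
    exact hne (mul_left_cancel ((sq x).symm.trans (hx.trans hxy.symm)))
  symm := ⟨fun _ _ ⟨hne, hxy⟩ => ⟨hne.symm, mul_eq_one_comm.mp hxy⟩⟩

theorem isMatching_inverseMatching (G : Type*) [Group G] [Finite G] :
    (inverseMatching G).IsMatching := by
  intro x hx
  refine ⟨x⁻¹, ⟨fun h => hx ?_, mul_inv_cancel x⟩, fun y hy => eq_inv_of_mul_eq_one_right hy.2⟩
  rw [sq]
  nth_rw 2 [h]
  exact mul_inv_cancel x

theorem stmt10 (G : Type*) [Group G] [Fintype G] (h : ¬ ∀ g : G, g ^ 2 = 1)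
    (m : ℕ) (hm : matchingNumber (powerGraph G) = m) :
    Fintype.card G < 8 * m + 4 := by
  classical
  set S : Finset G := {x | x ^ 2 = 1}
  have hS : 4 * #S ≤ 3 * Fintype.card G := by
    by_contra! hlt
    exact h (sq_eq_one_of_three_mul_card_lt hlt)
  have hverts : (inverseMatching G).verts.ncard = #Sᶜ := by
    rw [← Set.ncard_coe_finset]
    congr 1
    ext x
    simp [S, inverseMatching]
  have hM := isMatching_inverseMatching G
  have hmatch := hM.ncard_verts_le_two_mul.trans
    (Nat.mul_le_mul_left 2 (hm ▸ ncard_edgeSet_le_matchingNumber hM))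
  rw [hverts, card_compl] at hmatch
  omega
end
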